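/- arXiv:math/0305337 — 2 statements merged into one kernel-verified Lean document; each statement's English description precedes it below -/
import Mathlib

section
/- Let α be a free partial action of a subgroup G of (ℝ,+) on a topological space X, and give 𝒢 the topology generated by the sets O_{t,U}. Then there is a well-defined function c : 𝒢 → ℝ with c(x, α_t(x)) = t for every t ∈ G and x ∈ X_{−t} (the value t is unique by freeness), and c is a locally constant real-valued cocycle: (i) c(x,x) = 0 and c(y,x) = −c(x,y) for all (x,y) ∈ 𝒢; (ii) whenever (x,y) ∈ 𝒢 and (y,z) ∈ 𝒢, one has (x,z) ∈ 𝒢 and c(x,z) = c(x,y) + c(y,z); (iii) every point of 𝒢 has an open neighborhood on which c is constant. -/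
/-- A `Σ`-family on a set `X`, for a subset `S = Σ` of an abelian group `G` with
`Σ + Σ ⊆ Σ` and `0 ∈ Σ`: a family of bijections `α_t : X_{-t} → X_t` (`t ∈ Σ`) between
subsets of `X`, encoded by domain sets `D : G → Set X` together with total maps
`act t : X → X` (whose values outside `D (-t)` are irrelevant), such that `X_0 = X`
and `α_0 = id_X`. -/
structure SigmaFamily (G : Type*) [AddCommGroup G] (S : Set G) (X : Type*) where
  D : G → Set X
  act : G → X → X
  mapsTo : ∀ t ∈ S, Set.MapsTo (act t) (D (-t)) (D t)
  injOn : ∀ t ∈ S, Set.InjOn (act t) (D (-t))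
  surjOn : ∀ t ∈ S, Set.SurjOn (act t) (D (-t)) (D t)
  D_zero : D 0 = Set.univ
  act_zero : ∀ x, act 0 x = x

namespace SigmaFamily

variable {G : Type*} [AddCommGroup G] {S : Set G} {X : Type*}

/-- Statement (I) (resp. (II), (III)) of the third arrow property:
`x ∈ X_{-t}` and `y = α_t x`. -/
def ArrowI (F : SigmaFamily G S X) (t : G) (x y : X) : Prop :=
  x ∈ F.D (-t) ∧ y = F.act t x

/-- The third arrow property: any two of (I), (II), (III) imply the third. -/
def ThirdArrow (F : SigmaFamily G S X) : Prop :=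
  ∀ s ∈ S, ∀ t ∈ S, ∀ x y z : X,
    (F.ArrowI t x y → F.ArrowI s y z → F.ArrowI (s + t) x z) ∧
    (F.ArrowI t x y → F.ArrowI (s + t) x z → F.ArrowI s y z) ∧
    (F.ArrowI s y z → F.ArrowI (s + t) x z → F.ArrowI t x y)

/-- Condition (1a): `α_s(X_{-s} ∩ X_t) = X_s ∩ X_{s+t}`. -/
def Cond1a (F : SigmaFamily G S X) : Prop :=
  ∀ s ∈ S, ∀ t ∈ S, F.act s '' (F.D (-s) ∩ F.D t) = F.D s ∩ F.D (s + t)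

/-- Condition (1b): `α_t(X_{-t} ∩ X_{-s-t}) = X_t ∩ X_{-s}`. -/
def Cond1b (F : SigmaFamily G S X) : Prop :=
  ∀ s ∈ S, ∀ t ∈ S, F.act t '' (F.D (-t) ∩ F.D (-(s + t))) = F.D t ∩ F.D (-s)

/-- Condition (1′): `α_s(X_{-s} ∩ X_t) ⊆ X_{s+t}`. -/
def Cond1' (F : SigmaFamily G S X) : Prop :=
  ∀ s ∈ S, ∀ t ∈ S, F.act s '' (F.D (-s) ∩ F.D t) ⊆ F.D (s + t)

/-- Condition (2): for `x ∈ X_{-t} ∩ X_{-s-t}`, `α_t x ∈ X_{-s}` and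
`α_{s+t} x = α_s (α_t x)`. -/
def Cond2 (F : SigmaFamily G S X) : Prop :=
  ∀ s ∈ S, ∀ t ∈ S, ∀ x ∈ F.D (-t) ∩ F.D (-(s + t)),
    F.act t x ∈ F.D (-s) ∧ F.act (s + t) x = F.act s (F.act t x)

end SigmaFamily

namespace SigmaFamily

variable {G : Type*} [AddCommGroup G] {S : Set G} {X : Type*}

/-- The groupoid (equivalence relation) of a partial action:
`𝒢 = {(x, α_t x) : t, x ∈ X_{-t}}`. -/
def Gset (F : SigmaFamily G S X) : Set (X × X) :=
  {p | ∃ t ∈ S, p.1 ∈ F.D (-t) ∧ p.2 = F.act t p.1}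

/-- The basic sets `O_{t,U} = {(x, α_t x) : x ∈ U}` (for `U ⊆ X_{-t}`). -/
def Oset (F : SigmaFamily G S X) (t : G) (U : Set X) : Set (X × X) :=
  {p | p.1 ∈ U ∧ p.2 = F.act t p.1}

variable [TopologicalSpace X]

/-- The family of the sets `O_{t,U}` (`U ⊆ X_{-t}` open), viewed as subsets of `𝒢`. -/
def Bfam (F : SigmaFamily G S X) : Set (Set ↥(F.Gset)) :=
  {W | ∃ t ∈ S, ∃ U : Set X, IsOpen U ∧ U ⊆ F.D (-t) ∧
    W = Subtype.val ⁻¹' (F.Oset t U)}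

/-- The topology on `𝒢`: the smallest topology in which all the `O_{t,U}` are open. -/
def tauG (F : SigmaFamily G S X) : TopologicalSpace ↥(F.Gset) :=
  TopologicalSpace.generateFrom F.Bfam

/-- Freeness of a partial action: `α_t x = x` implies `t = 0`. -/
def IsFree (F : SigmaFamily G S X) : Prop :=
  ∀ t ∈ S, ∀ x ∈ F.D (-t), F.act t x = x → t = 0

end SigmaFamily

namespace SigmaFamily

variable {G₀ : Type*} [AddCommGroup G₀] {X : Type*}

lemma inv_act (F : SigmaFamily G₀ (Set.univ : Set G₀) X) (h2 : F.Cond2)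
    {t : G₀} {x : X} (hx : x ∈ F.D (-t)) :
    F.act t x ∈ F.D t ∧ F.act (-t) (F.act t x) = x := by
  have key := h2 (-t) trivial t trivial x
    ⟨hx, by rw [neg_add_cancel, neg_zero, F.D_zero]; trivial⟩
  obtain ⟨hmem, heq⟩ := key
  rw [neg_add_cancel, F.act_zero] at heq
  rw [neg_neg] at hmem
  exact ⟨hmem, heq.symm⟩

lemma uniq (F : SigmaFamily G₀ (Set.univ : Set G₀) X) (h2 : F.Cond2)
    (hfree : F.IsFree) {t s : G₀} {x : X}
    (ht : x ∈ F.D (-t)) (hs : x ∈ F.D (-s)) (h : F.act t x = F.act s x) :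
    t = s := by
  have key := h2 (s - t) trivial t trivial x ⟨ht, by rwa [sub_add_cancel]⟩
  obtain ⟨hy, heq⟩ := key
  rw [sub_add_cancel] at heq
  have hfix : F.act (s - t) (F.act t x) = F.act t x := by rw [← heq, h]
  have h0 := hfree (s - t) trivial _ hy hfix
  have := sub_eq_zero.mp h0
  exact this.symm

lemma comp (F : SigmaFamily G₀ (Set.univ : Set G₀) X)
    (h1 : F.Cond1') (h2 : F.Cond2) {s t : G₀} {x y z : X}
    (hx : x ∈ F.D (-t)) (hy : y = F.act t x) (hy' : y ∈ F.D (-s))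
    (hz : z = F.act s y) :
    x ∈ F.D (-(s + t)) ∧ z = F.act (s + t) x := by
  have hyt : y ∈ F.D t := hy ▸ (F.mapsTo t trivial hx)
  have hxeq : F.act (-t) y = x := by rw [hy]; exact (F.inv_act h2 hx).2
  have hx' : x ∈ F.D (-(s + t)) := by
    have hmem : x ∈ F.act (-t) '' (F.D (-(-t)) ∩ F.D (-s)) :=
      ⟨y, ⟨by rwa [neg_neg], hy'⟩, hxeq⟩
    have := h1 (-t) trivial (-s) trivial hmem
    rwa [show -t + -s = -(s + t) by abel] at this
  refine ⟨hx', ?_⟩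
  have key := h2 s trivial t trivial x ⟨hx, hx'⟩
  rw [hz, hy, key.2]

end SigmaFamily

/-- for a free partial action of a subgroup `G` of `(ℝ,+)` on a
topological space `X`, there is a well-defined function `c : 𝒢 → ℝ` with
`c (x, α_t x) = t` for every `t ∈ G` and `x ∈ X_{-t}` (the value `t` being unique by
freeness), and `c` is a locally constant real-valued cocycle:
(i) `c (x,x) = 0` and `c (y,x) = -c (x,y)` for all `(x,y) ∈ 𝒢`;
(ii) whenever `(x,y) ∈ 𝒢` and `(y,z) ∈ 𝒢`, also `(x,z) ∈ 𝒢` and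
`c (x,z) = c (x,y) + c (y,z)`;
(iii) every point of `𝒢` has an open neighborhood on which `c` is constant. -/
theorem exists_locallyConstant_cocycle {X : Type*} [TopologicalSpace X]
    (G : AddSubgroup ℝ)
    (F : SigmaFamily ↥G (Set.univ : Set ↥G) X) (h1 : F.Cond1') (h2 : F.Cond2)
    (hopen : ∀ g : ↥G, IsOpen (F.D g))
    (hcont : ∀ g : ↥G, ContinuousOn (F.act g) (F.D (-g)))
    (hfree : F.IsFree) :
    ∃ c : ↥F.Gset → ℝ,
      (∀ (p : ↥F.Gset) (t : ↥G), (p : X × X).1 ∈ F.D (-t) →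
        (p : X × X).2 = F.act t (p : X × X).1 → c p = (t : ℝ)) ∧
      (∀ p : ↥F.Gset, (p : X × X).1 = (p : X × X).2 → c p = 0) ∧
      (∀ p q : ↥F.Gset, (q : X × X) = ((p : X × X).2, (p : X × X).1) → c q = - c p) ∧
      (∀ p q : ↥F.Gset, (p : X × X).2 = (q : X × X).1 →
        ∃ r : ↥F.Gset, (r : X × X) = ((p : X × X).1, (q : X × X).2) ∧
          c r = c p + c q) ∧
      (∀ p : ↥F.Gset, ∃ O : Set ↥F.Gset, @IsOpen ↥F.Gset F.tauG O ∧ p ∈ O ∧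
        ∀ q ∈ O, c q = c p) := by
  classical
  have mem_iff : ∀ p : X × X, p ∈ F.Gset ↔
      ∃ t : ↥G, p.1 ∈ F.D (-t) ∧ p.2 = F.act t p.1 := by
    intro p
    simp [SigmaFamily.Gset]
  choose tt htt1 htt2 using fun p : ↥F.Gset => (mem_iff p.val).mp p.2
  refine ⟨fun p => (tt p : ℝ), ?_, ?_, ?_, ?_, ?_⟩
  · -- spec
    intro p t ht1 ht2
    have : tt p = t := F.uniq h2 hfree (htt1 p) ht1 (by rw [← htt2 p, ← ht2])
    simp only [this]
  · -- c (x,x) = 0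
    intro p hp
    have h0 : tt p = 0 := by
      refine hfree (tt p) trivial _ (htt1 p) ?_
      rw [← htt2 p, ← hp]
    simp only [h0]; simp
  · -- inverse
    intro p q hq
    have h1' : (q : X × X).1 ∈ F.D (-(-(tt p))) := by
      rw [hq, neg_neg]
      exact htt2 p ▸ F.mapsTo (tt p) trivial (htt1 p)
    have h2' : (q : X × X).2 = F.act (-(tt p)) (q : X × X).1 := by
      rw [hq]
      show (p : X × X).1 = F.act (-(tt p)) (p : X × X).2
      rw [htt2 p]
      exact ((F.inv_act h2 (htt1 p)).2).symm
    have : tt q = -(tt p) := F.uniq h2 hfree (htt1 q) h1' (by rw [← htt2 q, ← h2'])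
    simp only [this]; push_cast; ring
  · -- cocycle
    intro p q hpq
    have hy' : (p : X × X).2 ∈ F.D (-(tt q)) := by rw [hpq]; exact htt1 q
    have hz : (q : X × X).2 = F.act (tt q) (p : X × X).2 := by
      rw [hpq]; exact htt2 q
    have hc := F.comp h1 h2 (htt1 p) (htt2 p) hy' hz
    have hr : ((p : X × X).1, (q : X × X).2) ∈ F.Gset :=
      (mem_iff _).mpr ⟨tt q + tt p, hc.1, hc.2⟩
    refine ⟨⟨_, hr⟩, rfl, ?_⟩
    have : tt ⟨((p : X × X).1, (q : X × X).2), hr⟩ = tt q + tt p :=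
      F.uniq h2 hfree (htt1 _) hc.1 (by
        rw [← htt2 ⟨((p : X × X).1, (q : X × X).2), hr⟩]
        exact hc.2)
    simp only [this]; push_cast; ring
  · -- local constancy
    intro p
    refine ⟨Subtype.val ⁻¹' (F.Oset (tt p) (F.D (-(tt p)))), ?_, ⟨htt1 p, htt2 p⟩, ?_⟩
    · exact TopologicalSpace.GenerateOpen.basic _
        ⟨tt p, trivial, F.D (-(tt p)), hopen _, subset_rfl, rfl⟩
    · intro q hq
      have : tt q = tt p := F.uniq h2 hfree (htt1 q) hq.1 (by rw [← htt2 q, ← hq.2])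
      simp only [this]
end

section
/- Let G be an abelian group, and for each i ∈ ℕ let β⁽ⁱ⁾ be a partial action of G on a locally compact Hausdorff space X_i, with domains D⁽ⁱ⁾_{−g} and ranges D⁽ⁱ⁾_g. Let φ_i : X_{i+1} → X_i be continuous surjections intertwining the actions: for all g ∈ G and x ∈ X_{i+1}, φ_i(x) ∈ D⁽ⁱ⁾_g if and only if x ∈ D⁽ⁱ⁺¹⁾_g, and β⁽ⁱ⁾_g(φ_i(x)) = φ_i(β⁽ⁱ⁺¹⁾_g(x)) for x ∈ D⁽ⁱ⁺¹⁾_{−g}. Let X = {(x_i) ∈ ∏_i X_i : φ_i(x_{i+1}) = x_i for all i} with the subspace topology of the product, and let π_i : X → X_i be the coordinate projections. Then for each g ∈ G: (i) the set D_{−g} = {(x_i) ∈ X : x_i ∈ D⁽ⁱ⁾_{−g} for all i} equals π_1⁻¹(D⁽¹⁾_{−g}) and hence is open in X; (ii) β_g((x_i)) = (β⁽ⁱ⁾_g(x_i))_i defines a homeomorphism from D_{−g} onto D_g = {(x_i) ∈ X : x_i ∈ D⁽ⁱ⁾_g for all i}; and (iii) the family β = {β_g : g ∈ G} is a partial action of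 G on X. -/
/-- The inverse limit of the system `(Xᵢ, φᵢ)`. -/
abbrev InvLim (X : ℕ → Type*) (φ : ∀ i, X (i + 1) → X i) : Type _ :=
  {x : ∀ i, X i // ∀ i, φ i (x (i + 1)) = x i}

/-- The coordinatewise domain sets on the inverse limit:
`D_g = {(xᵢ) : xᵢ ∈ D⁽ⁱ⁾_g for all i}`. -/
def DL (X : ℕ → Type*) (φ : ∀ i, X (i + 1) → X i) {G : Type*} [AddCommGroup G]
    (β : ∀ i, SigmaFamily G (Set.univ : Set G) (X i)) (g : G) : Set (InvLim X φ) :=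
  {x | ∀ i, x.val i ∈ (β i).D g}

/-!
Everything is coordinatewise. Since each `φᵢ` intertwines the domains exactly (`φᵢ x ∈ D⁽ⁱ⁾_g ↔
x ∈ D⁽ⁱ⁺¹⁾_g`), membership of a thread `(xᵢ)` in `D_g` is decided by its coordinate `x₀`, so
`D_g` is the preimage of an open set under a continuous projection. On `D_{-g}` the maps `β⁽ⁱ⁾_g`
send threads to threads, and the axioms of a partial action, holding in each coordinate, hold
for the limit. By condition (2) with `s = -t`, `β_{-t}` inverts `β_t`, which makes each `β_g` a
homeomorphism `D_{-g} ≃ₜ D_g` once it is continuous.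
-/

open Set

namespace SigmaFamily

variable {G : Type*} [AddCommGroup G] {Y : Type*} (F : SigmaFamily G (univ : Set G) Y)

theorem act_neg_act (h2 : F.Cond2) {t : G} {x : Y} (hx : x ∈ F.D (-t)) :
    F.act (-t) (F.act t x) = x := by
  have h := (h2 (-t) trivial t trivial x (by simpa [F.D_zero] using hx)).2
  simpa [F.act_zero] using h.symm

theorem act_act_neg (h2 : F.Cond2) {t : G} {x : Y} (hx : x ∈ F.D t) :
    F.act t (F.act (-t) x) = x := by
  simpa using F.act_neg_act h2 (t := -t) (by simpa using hx)

theorem mapsTo_act_neg (t : G) : MapsTo (F.act (-t)) (F.D t) (F.D (-t)) := by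
  simpa using F.mapsTo (-t) trivial

def homeomorph [TopologicalSpace Y] (h2 : F.Cond2)
    (hcont : ∀ g, ContinuousOn (F.act g) (F.D (-g))) (g : G) : F.D (-g) ≃ₜ F.D g where
  toFun := (F.mapsTo g trivial).restrict
  invFun := (F.mapsTo_act_neg g).restrict
  left_inv x := Subtype.ext (F.act_neg_act h2 x.2)
  right_inv y := Subtype.ext (F.act_act_neg h2 y.2)
  continuous_toFun := (hcont g).mapsToRestrict _
  continuous_invFun :=
    (by simpa using hcont (-g) : ContinuousOn (F.act (-g)) (F.D g)).mapsToRestrict _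

end SigmaFamily

section InverseLimit

variable {G : Type*} [AddCommGroup G] {X : ℕ → Type*} {φ : ∀ i, X (i + 1) → X i}
  (β : ∀ i, SigmaFamily G (univ : Set G) (X i))

theorem DL_eq_preimage
    (hiff : ∀ i (g : G) (x : X (i + 1)), φ i x ∈ (β i).D g ↔ x ∈ (β (i + 1)).D g) (g : G) :
    DL X φ β g = (fun x : InvLim X φ => x.val 0) ⁻¹' (β 0).D g := by
  ext x
  refine ⟨fun hx => hx 0, fun h0 i => ?_⟩
  induction i with
  | zero => exact h0
  | succ i ih => exact (hiff i g _).mp (x.property i ▸ ih)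

variable (hint : ∀ i (g : G), ∀ x ∈ (β (i + 1)).D (-g),
  (β i).act g (φ i x) = φ i ((β (i + 1)).act g x))

open Classical in
-- Off `D_{-g}` the coordinatewise values need not form a thread; there we use the identity.
noncomputable def invLimAct (g : G) (x : InvLim X φ) : InvLim X φ :=
  if hx : x ∈ DL X φ β (-g) then
    ⟨fun i => (β i).act g (x.val i), fun i => by rw [← hint i g _ (hx (i + 1)), x.property i]⟩
  else x

theorem invLimAct_val {g : G} {x : InvLim X φ} (hx : x ∈ DL X φ β (-g)) (i : ℕ) :
    (invLimAct β hint g x).val i = (β i).act g (x.val i) := by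
  simp [invLimAct, hx]

theorem mapsTo_invLimAct (g : G) : MapsTo (invLimAct β hint g) (DL X φ β (-g)) (DL X φ β g) :=
  fun _ hx i => invLimAct_val β hint hx i ▸ (β i).mapsTo g trivial (hx i)

theorem leftInvOn_invLimAct (h2 : ∀ i, (β i).Cond2) (g : G) :
    LeftInvOn (invLimAct β hint (-g)) (invLimAct β hint g) (DL X φ β (-g)) := by
  intro x hx
  have hgx : invLimAct β hint g x ∈ DL X φ β (-(-g)) := by
    simpa using mapsTo_invLimAct β hint g hx
  ext i
  rw [invLimAct_val β hint hgx, invLimAct_val β hint hx]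
  exact (β i).act_neg_act (h2 i) (hx i)

noncomputable def invLimFamily (h2 : ∀ i, (β i).Cond2) :
    SigmaFamily G (univ : Set G) (InvLim X φ) where
  D := DL X φ β
  act := invLimAct β hint
  mapsTo t _ := mapsTo_invLimAct β hint t
  injOn t _ := (leftInvOn_invLimAct β hint h2 t).injOn
  surjOn t _ := by
    simpa using (leftInvOn_invLimAct β hint h2 (-t)).surjOn (mapsTo_invLimAct β hint (-t))
  D_zero := by
    ext x
    simp [DL, SigmaFamily.D_zero]
  act_zero x := by
    have hx : x ∈ DL X φ β (-0) := fun i => by simp [SigmaFamily.D_zero]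
    ext i
    rw [invLimAct_val β hint hx]
    exact (β i).act_zero _

variable (h2 : ∀ i, (β i).Cond2)

theorem invLimFamily_cond1' (h1 : ∀ i, (β i).Cond1') : (invLimFamily β hint h2).Cond1' := by
  rintro s - t - y ⟨x, ⟨hxs, hxt⟩, rfl⟩ i
  change (invLimAct β hint s x).val i ∈ (β i).D (s + t)
  rw [invLimAct_val β hint hxs]
  exact h1 i s trivial t trivial ⟨x.val i, ⟨hxs i, hxt i⟩, rfl⟩

theorem invLimFamily_cond2 : (invLimFamily β hint h2).Cond2 := by
  rintro s - t - x ⟨hxt, hxst⟩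
  have hcoord i := h2 i s trivial t trivial (x.val i) ⟨hxt i, hxst i⟩
  have htx : invLimAct β hint t x ∈ DL X φ β (-s) := fun i =>
    invLimAct_val β hint hxt i ▸ (hcoord i).1
  refine ⟨htx, ?_⟩
  ext i
  change (invLimAct β hint (s + t) x).val i = (invLimAct β hint s (invLimAct β hint t x)).val i
  rw [invLimAct_val β hint hxst, invLimAct_val β hint htx, invLimAct_val β hint hxt]
  exact (hcoord i).2

theorem continuousOn_invLimAct [∀ i, TopologicalSpace (X i)]
    (hcont : ∀ i (g : G), ContinuousOn ((β i).act g) ((β i).D (-g))) (g : G) :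
    ContinuousOn (invLimAct β hint g) (DL X φ β (-g)) := by
  have hcoord : ContinuousOn (fun x : InvLim X φ => fun i => (β i).act g (x.val i))
      (DL X φ β (-g)) :=
    continuousOn_pi.mpr fun i =>
      (hcont i g).comp ((continuous_apply i).comp continuous_subtype_val).continuousOn
        fun _ hx => hx i
  refine Topology.IsInducing.subtypeVal.continuousOn_iff.mpr (hcoord.congr fun x hx => ?_)
  funext i
  exact invLimAct_val β hint hx i

end InverseLimit

theorem invLim_partialAction_general {G : Type*} [AddCommGroup G] (X : ℕ → Type*)
    [∀ i, TopologicalSpace (X i)]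
    (β : ∀ i, SigmaFamily G (Set.univ : Set G) (X i))
    (h1 : ∀ i, (β i).Cond1') (h2 : ∀ i, (β i).Cond2)
    (hopen : ∀ i (g : G), IsOpen ((β i).D g))
    (hcont : ∀ i (g : G), ContinuousOn ((β i).act g) ((β i).D (-g)))
    (φ : ∀ i, X (i + 1) → X i)
    (hiff : ∀ i (g : G) (x : X (i + 1)), φ i x ∈ (β i).D g ↔ x ∈ (β (i + 1)).D g)
    (hint : ∀ i (g : G), ∀ x ∈ (β (i + 1)).D (-g),
      (β i).act g (φ i x) = φ i ((β (i + 1)).act g x)) :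
    (∀ g : G,
      DL X φ β (-g) = (fun x : InvLim X φ => x.val 0) ⁻¹' ((β 0).D (-g)) ∧
      IsOpen (DL X φ β (-g))) ∧
    (∀ g : G, ∃ e : ↥(DL X φ β (-g)) ≃ₜ ↥(DL X φ β g),
      ∀ (x : ↥(DL X φ β (-g))) (i : ℕ),
        (e x).val.val i = (β i).act g (x.val.val i)) ∧
    (∃ B : SigmaFamily G (Set.univ : Set G) (InvLim X φ), B.Cond1' ∧ B.Cond2 ∧
      (∀ g : G, B.D g = DL X φ β g) ∧
      (∀ g : G, ∀ x ∈ DL X φ β (-g), ∀ i, (B.act g x).val i = (β i).act g (x.val i)) ∧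
      (∀ g : G, IsOpen (B.D g)) ∧
      (∀ g : G, ContinuousOn (B.act g) (B.D (-g)))) := by
  have hDL_open (g : G) : IsOpen (DL X φ β g) := by
    rw [DL_eq_preimage β hiff]
    exact (hopen 0 g).preimage ((continuous_apply 0).comp continuous_subtype_val)
  let B := invLimFamily β hint h2
  have hB_cont (g : G) : ContinuousOn (B.act g) (B.D (-g)) :=
    continuousOn_invLimAct β hint hcont g
  refine ⟨fun g => ⟨DL_eq_preimage β hiff (-g), hDL_open (-g)⟩,
    fun g => ⟨B.homeomorph (invLimFamily_cond2 β hint h2) hB_cont g,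
      fun x i => invLimAct_val β hint x.2 i⟩,
    ⟨B, invLimFamily_cond1' β hint h2 h1, invLimFamily_cond2 β hint h2, fun _ => rfl,
    fun _ _ hx i => invLimAct_val β hint hx i, hDL_open, hB_cont⟩⟩

/-- given partial actions `β⁽ⁱ⁾` of an abelian group `G` on locally
compact Hausdorff spaces `Xᵢ` intertwined by continuous surjections `φᵢ`, on the
inverse limit `X`: (i) `D_{-g}` equals the preimage of `D⁽⁰⁾_{-g}` under the first
coordinate projection, hence is open; (ii) acting coordinatewise gives a
homeomorphism of `D_{-g}` onto `D_g`; (iii) the coordinatewise family is a partial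
action of `G` on `X` (with open domains and continuous action). -/
theorem invLim_partialAction {G : Type*} [AddCommGroup G] (X : ℕ → Type*)
    [∀ i, TopologicalSpace (X i)] [∀ i, LocallyCompactSpace (X i)] [∀ i, T2Space (X i)]
    (β : ∀ i, SigmaFamily G (Set.univ : Set G) (X i))
    (h1 : ∀ i, (β i).Cond1') (h2 : ∀ i, (β i).Cond2)
    (hopen : ∀ i (g : G), IsOpen ((β i).D g))
    (hcont : ∀ i (g : G), ContinuousOn ((β i).act g) ((β i).D (-g)))
    (φ : ∀ i, X (i + 1) → X i)
    (hφc : ∀ i, Continuous (φ i)) (hφs : ∀ i, Function.Surjective (φ i))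
    (hiff : ∀ i (g : G) (x : X (i + 1)), φ i x ∈ (β i).D g ↔ x ∈ (β (i + 1)).D g)
    (hint : ∀ i (g : G), ∀ x ∈ (β (i + 1)).D (-g),
      (β i).act g (φ i x) = φ i ((β (i + 1)).act g x)) :
    (∀ g : G,
      DL X φ β (-g) = (fun x : InvLim X φ => x.val 0) ⁻¹' ((β 0).D (-g)) ∧
      IsOpen (DL X φ β (-g))) ∧
    (∀ g : G, ∃ e : ↥(DL X φ β (-g)) ≃ₜ ↥(DL X φ β g),
      ∀ (x : ↥(DL X φ β (-g))) (i : ℕ),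
        (e x).val.val i = (β i).act g (x.val.val i)) ∧
    (∃ B : SigmaFamily G (Set.univ : Set G) (InvLim X φ), B.Cond1' ∧ B.Cond2 ∧
      (∀ g : G, B.D g = DL X φ β g) ∧
      (∀ g : G, ∀ x ∈ DL X φ β (-g), ∀ i, (B.act g x).val i = (β i).act g (x.val i)) ∧
      (∀ g : G, IsOpen (B.D g)) ∧
      (∀ g : G, ContinuousOn (B.act g) (B.D (-g)))) :=
  invLim_partialAction_general X β h1 h2 hopen hcont φ hiff hint
end
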